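/- Product estimate in Fourier: for smooth 2π-periodic functions f, g, h on the 3-torus with f and g of zero mean, any r ≥ 0 and ε > 0, |⟨A^r(fg), h⟩| ≤ C_r (‖A^r f‖ ‖A^{3/4+ε} g‖ + ‖A^{3/4+ε} f‖ ‖A^r g‖) ‖h‖, where A^s acts on Fourier modes by multiplication by |k|^{2s} and ‖·‖ is the L^2 norm. -/

import Mathlib

/-!
Pass to the moduli of the Fourier coefficients in `ℝ≥0∞`, where every sum exists and can be
reordered. Writing `l = j + k`, the bound `|j + k|^{2r} ≤ C_r (|j|^{2r} + |k|^{2r})` splits the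
pairing into two sums `∑_{j,k} a_j b_k c_{j+k}`, each at most `‖a‖_{ℓ²} ‖b‖_{ℓ¹} ‖c‖_{ℓ²}` by
Cauchy–Schwarz in `j` for fixed `k`. Finally, as `f̂_0 = ĝ_0 = 0`, Cauchy–Schwarz against the
convergent lattice sum `∑_{k ≠ 0} |k|^{-3-4ε}` bounds the `ℓ¹` norms:
`‖ĝ‖_{ℓ¹} ≤ c_ε ‖A^{3/4+ε} g‖`.
-/

/-- Euclidean norm of a lattice vector. -/
noncomputable def znorm (k : Fin 3 → ℤ) : ℝ := Real.sqrt (∑ i, ((k i : ℝ)) ^ 2)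

/-- The norm `‖A^s f‖` in Fourier variables: `(∑_j |j|^{4s} |f̂_j|²)^{1/2}`. -/
noncomputable def sobNorm (s : ℝ) (f : (Fin 3 → ℤ) → ℂ) : ℝ :=
  Real.sqrt (∑' j : Fin 3 → ℤ, znorm j ^ (4 * s) * ‖f j‖ ^ 2)

open scoped ENNReal

theorem ENNReal.inner_le_Lp_mul_Lq_tsum {ι : Type*} (f g : ι → ℝ≥0∞) {p q : ℝ}
    (hpq : p.HolderConjugate q) :
    ∑' i, f i * g i ≤ (∑' i, f i ^ p) ^ (1 / p) * (∑' i, g i ^ q) ^ (1 / q) := by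
  rw [ENNReal.tsum_eq_iSup_sum]
  refine iSup_le fun s => (ENNReal.inner_le_Lp_mul_Lq s f g hpq).trans ?_
  have := hpq.pos
  have := hpq.symm.pos
  gcongr <;> exact ENNReal.sum_le_tsum s

theorem ENNReal.tsum_tsum_mul_mul_add_le {M : Type*} [AddGroup M] (A G H : M → ℝ≥0∞) :
    ∑' j, ∑' k, A j * G k * H (j + k) ≤
      (∑' j, A j ^ (2 : ℝ)) ^ (1 / 2 : ℝ) * (∑' k, G k) * (∑' l, H l ^ (2 : ℝ)) ^ (1 / 2 : ℝ) := by
  have hpq : (2 : ℝ).HolderConjugate 2 := .two_two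
  calc ∑' j, ∑' k, A j * G k * H (j + k) = ∑' k, G k * ∑' j, A j * H (j + k) := by
        rw [ENNReal.tsum_comm]
        refine tsum_congr fun k => ?_
        rw [← ENNReal.tsum_mul_left]
        exact tsum_congr fun j => by ring
    _ ≤ ∑' k, G k *
          ((∑' j, A j ^ (2 : ℝ)) ^ (1 / 2 : ℝ) * (∑' l, H l ^ (2 : ℝ)) ^ (1 / 2 : ℝ)) := by
        gcongr with k
        refine (ENNReal.inner_le_Lp_mul_Lq_tsum A (fun j => H (j + k)) hpq).trans_eq ?_
        congr 2
        exact (Equiv.addRight k).tsum_eq fun l => H l ^ (2 : ℝ)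
    _ = _ := by rw [ENNReal.tsum_mul_right]; ring

namespace FourierProduct

noncomputable def lat {n : ℕ} (k : Fin n → ℤ) : EuclideanSpace ℝ (Fin n) :=
  WithLp.toLp 2 fun i => (k i : ℝ)

theorem lat_add {n : ℕ} (j k : Fin n → ℤ) : lat (j + k) = lat j + lat k := by
  ext i
  simp [lat]

theorem lat_eq_zero {n : ℕ} {k : Fin n → ℤ} : lat k = 0 ↔ k = 0 := by
  simp [lat, funext_iff, WithLp.ext_iff]

theorem summable_norm_lat_rpow {n : ℕ} {t : ℝ} (ht : n < t) :
    Summable fun k : Fin n → ℤ => ‖lat k‖ ^ (-t) := by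
  let b := (EuclideanSpace.basisFun (Fin n) ℝ).toBasis
  let bℤ := b.restrictScalars ℤ
  have hrank : Module.finrank ℤ (Submodule.span ℤ (Set.range b)) = n := by
    simp [Module.finrank_eq_card_basis bℤ]
  have hL := ZLattice.summable_norm_rpow (Submodule.span ℤ (Set.range b)) (-t)
    (by rw [hrank]; linarith)
  refine (bℤ.equivFun.symm.toEquiv.summable_iff.mpr hL).congr fun k => ?_
  have : (bℤ.equivFun.symm k : EuclideanSpace ℝ (Fin n)) = lat k := by
    rw [Module.Basis.equivFun_symm_apply, Submodule.coe_sum]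
    simp_rw [Submodule.coe_smul_of_tower, bℤ, Module.Basis.restrictScalars_apply]
    ext i
    simp [b, lat, Pi.single_apply]
  simp [← this]

theorem znorm_eq_norm_lat (k : Fin 3 → ℤ) : znorm k = ‖lat k‖ := by
  simp [znorm, lat, EuclideanSpace.norm_eq]

theorem znorm_nonneg (k : Fin 3 → ℤ) : 0 ≤ znorm k := Real.sqrt_nonneg _

theorem sobNorm_nonneg (s : ℝ) (φ : (Fin 3 → ℤ) → ℂ) : 0 ≤ sobNorm s φ := Real.sqrt_nonneg _

theorem summable_znorm_rpow {t : ℝ} (ht : 3 < t) :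
    Summable fun k : Fin 3 → ℤ => znorm k ^ (-t) := by
  simpa only [znorm_eq_norm_lat] using summable_norm_lat_rpow (n := 3) (by exact_mod_cast ht)

theorem ofReal_znorm (k : Fin 3 → ℤ) : ENNReal.ofReal (znorm k) = ‖lat k‖ₑ := by
  rw [znorm_eq_norm_lat, ofReal_norm]

theorem enorm_lat_add_rpow_le {t : ℝ} (ht : 0 ≤ t) (j k : Fin 3 → ℤ) :
    ‖lat (j + k)‖ₑ ^ t ≤
      ENNReal.LpAddConst (ENNReal.ofReal t)⁻¹ * (‖lat j‖ₑ ^ t + ‖lat k‖ₑ ^ t) := by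
  calc ‖lat (j + k)‖ₑ ^ t ≤ (‖lat j‖ₑ + ‖lat k‖ₑ) ^ t := by
        rw [lat_add]
        gcongr
        exact enorm_add_le _ _
    _ ≤ _ := ENNReal.rpow_add_le_mul_rpow_add_rpow' _ _ ht

noncomputable def sobENorm (s : ℝ) (F : (Fin 3 → ℤ) → ℝ≥0∞) : ℝ≥0∞ :=
  (∑' k, (‖lat k‖ₑ ^ (2 * s) * F k) ^ (2 : ℝ)) ^ (1 / 2 : ℝ)

theorem tsum_le_mul_sobENorm {s : ℝ} (hs : 3 / 4 < s) (G : (Fin 3 → ℤ) → ℝ≥0∞) (hG : G 0 = 0) :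
    ∑' k, G k ≤ ENNReal.ofReal √(∑' k, znorm k ^ (-(4 * s))) * sobENorm s G := by
  -- Real `rpow` has `0 ^ x = 0` for `x ≠ 0`, so `u` vanishes at the origin, as `G` does.
  set u : (Fin 3 → ℤ) → ℝ≥0∞ := fun k => ENNReal.ofReal (znorm k ^ (-(2 * s)))
  have hsplit : ∀ k, G k = u k * (‖lat k‖ₑ ^ (2 * s) * G k) := by
    intro k
    rcases eq_or_ne k 0 with rfl | hk
    · simp [hG]
    have hk' : ‖lat k‖ₑ ≠ 0 := enorm_ne_zero.mpr (lat_eq_zero.not.mpr hk)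
    have hpos : 0 < znorm k := by
      rw [znorm_eq_norm_lat]
      exact norm_pos_iff.mpr (lat_eq_zero.not.mpr hk)
    simp only [u]
    rw [← mul_assoc, ← ENNReal.ofReal_rpow_of_pos hpos, ofReal_znorm,
      ← ENNReal.rpow_add _ _ hk' enorm_ne_top, neg_add_cancel, ENNReal.rpow_zero, one_mul]
  have hu : ∑' k, u k ^ (2 : ℝ) = ENNReal.ofReal (∑' k, znorm k ^ (-(4 * s))) := by
    rw [ENNReal.ofReal_tsum_of_nonneg (fun k => Real.rpow_nonneg (znorm_nonneg k) _)
      (summable_znorm_rpow (by linarith))]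
    refine tsum_congr fun k => ?_
    rw [ENNReal.ofReal_rpow_of_nonneg (Real.rpow_nonneg (znorm_nonneg k) _) (by norm_num),
      ← Real.rpow_mul (znorm_nonneg k)]
    ring_nf
  calc ∑' k, G k = ∑' k, u k * (‖lat k‖ₑ ^ (2 * s) * G k) := tsum_congr hsplit
    _ ≤ (∑' k, u k ^ (2 : ℝ)) ^ (1 / 2 : ℝ) * sobENorm s G :=
        ENNReal.inner_le_Lp_mul_Lq_tsum _ _ .two_two
    _ = _ := by
        rw [hu, ENNReal.ofReal_rpow_of_nonneg (tsum_nonneg fun k =>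
          Real.rpow_nonneg (znorm_nonneg k) _) (by norm_num), Real.sqrt_eq_rpow]

-- `LpAddConst (1 / p)` is the constant `C_p` in `(a + b) ^ p ≤ C_p (a ^ p + b ^ p)`; here `p = 2r`.
noncomputable def productConst (r s : ℝ) : ℝ≥0∞ :=
  ENNReal.LpAddConst (ENNReal.ofReal (2 * r))⁻¹ * ENNReal.ofReal √(∑' k, znorm k ^ (-(4 * s)))

theorem productConst_ne_top (r s : ℝ) : productConst r s ≠ ⊤ :=
  ENNReal.mul_ne_top (ENNReal.LpAddConst_lt_top _).ne ENNReal.ofReal_ne_top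

theorem tsum_tsum_rpow_mul_le {r s : ℝ} (hr : 0 ≤ r) (hs : 3 / 4 < s)
    (F G H : (Fin 3 → ℤ) → ℝ≥0∞) (hF : F 0 = 0) (hG : G 0 = 0) :
    ∑' j, ∑' k, ‖lat (j + k)‖ₑ ^ (2 * r) * F j * G k * H (j + k) ≤
      productConst r s *
        (sobENorm r F * sobENorm s G + sobENorm s F * sobENorm r G) * sobENorm 0 H := by
  set K := ENNReal.LpAddConst (ENNReal.ofReal (2 * r))⁻¹
  set c := ENNReal.ofReal √(∑' k, znorm k ^ (-(4 * s)))
  have hsplit : ∑' j, ∑' k, ‖lat (j + k)‖ₑ ^ (2 * r) * F j * G k * H (j + k) ≤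
      K * (∑' j, ∑' k, (‖lat j‖ₑ ^ (2 * r) * F j) * G k * H (j + k) +
        ∑' k, ∑' j, (‖lat k‖ₑ ^ (2 * r) * G k) * F j * H (k + j)) := by
    rw [ENNReal.tsum_comm (f := fun k j => (‖lat k‖ₑ ^ (2 * r) * G k) * F j * H (k + j)),
      ← ENNReal.tsum_add, ← ENNReal.tsum_mul_left]
    refine ENNReal.tsum_le_tsum fun j => ?_
    rw [← ENNReal.tsum_add, ← ENNReal.tsum_mul_left]
    refine ENNReal.tsum_le_tsum fun k => ?_
    calc _ ≤ K * (‖lat j‖ₑ ^ (2 * r) + ‖lat k‖ₑ ^ (2 * r)) * F j * G k * H (j + k) := by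
          gcongr
          exact enorm_lat_add_rpow_le (by linarith) j k
      _ = _ := by rw [add_comm k j]; ring
  have hH : (∑' l, H l ^ (2 : ℝ)) ^ (1 / 2 : ℝ) = sobENorm 0 H := by simp [sobENorm]
  calc _ ≤ _ := hsplit
    _ ≤ K * (sobENorm r F * (∑' k, G k) * sobENorm 0 H +
          sobENorm r G * (∑' j, F j) * sobENorm 0 H) := by
        rw [← hH]
        gcongr <;> exact ENNReal.tsum_tsum_mul_mul_add_le _ _ _
    _ ≤ K * (sobENorm r F * (c * sobENorm s G) * sobENorm 0 H +
          sobENorm r G * (c * sobENorm s F) * sobENorm 0 H) := by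
        gcongr
        · exact tsum_le_mul_sobENorm hs G hG
        · exact tsum_le_mul_sobENorm hs F hF
    _ = _ := by rw [productConst]; ring

theorem enorm_tsum_conv_le {t : ℝ} (ht : 0 ≤ t) (f g h : (Fin 3 → ℤ) → ℂ) :
    ‖∑' l, ((znorm l ^ t : ℝ) : ℂ) * (∑' j, f j * g (l - j)) * starRingEnd ℂ (h l)‖ₑ ≤
      ∑' j, ∑' k, ‖lat (j + k)‖ₑ ^ t * ‖f j‖ₑ * ‖g k‖ₑ * ‖h (j + k)‖ₑ := by
  have hweight : ∀ l, ‖((znorm l ^ t : ℝ) : ℂ)‖ₑ = ‖lat l‖ₑ ^ t := fun l => by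
    rw [← ofReal_norm, Complex.norm_real, Real.norm_of_nonneg (Real.rpow_nonneg (znorm_nonneg l) t),
      ← ENNReal.ofReal_rpow_of_nonneg (znorm_nonneg l) ht, ofReal_znorm]
  calc _ ≤ ∑' l, ‖lat l‖ₑ ^ t * (∑' j, ‖f j‖ₑ * ‖g (l - j)‖ₑ) * ‖h l‖ₑ := by
        refine enorm_tsum_le_tsum_enorm.trans (ENNReal.tsum_le_tsum fun l => ?_)
        rw [enorm_mul, enorm_mul, hweight, RCLike.enorm_conj]
        gcongr
        simpa only [enorm_mul] using enorm_tsum_le_tsum_enorm (f := fun j => f j * g (l - j))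
    _ = ∑' j, ∑' l, ‖lat l‖ₑ ^ t * ‖f j‖ₑ * ‖g (l - j)‖ₑ * ‖h l‖ₑ := by
        rw [ENNReal.tsum_comm]
        refine tsum_congr fun l => ?_
        rw [← ENNReal.tsum_mul_left, ← ENNReal.tsum_mul_right]
        exact tsum_congr fun j => by ring
    _ = _ := by
        refine tsum_congr fun j => ?_
        rw [← (Equiv.addLeft j).tsum_eq]
        simp

theorem summable_mul_sq_of_summable_mul {α : Type*} {w a : α → ℝ} (hw : ∀ i, 0 ≤ w i)
    (ha : ∀ i, 0 ≤ a i) (hwa : Summable fun i => w i * a i) (hsum : Summable a) :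
    Summable fun i => w i * a i ^ 2 := by
  refine (hwa.mul_left (∑' i, a i)).of_nonneg_of_le
    (fun i => mul_nonneg (hw i) (pow_nonneg (ha i) 2)) fun i => ?_
  calc w i * a i ^ 2 = a i * (w i * a i) := by ring
    _ ≤ (∑' i, a i) * (w i * a i) := by
        gcongr
        · exact mul_nonneg (hw i) (ha i)
        · exact hsum.le_tsum i fun j _ => ha j

theorem ofReal_sobNorm {s : ℝ} (hs : 0 ≤ s) {φ : (Fin 3 → ℤ) → ℂ}
    (hφ : Summable fun j => znorm j ^ (4 * s) * ‖φ j‖ ^ 2) :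
    ENNReal.ofReal (sobNorm s φ) = sobENorm s fun j => ‖φ j‖ₑ := by
  have hnonneg : ∀ j, 0 ≤ znorm j ^ (4 * s) * ‖φ j‖ ^ 2 :=
    fun j => mul_nonneg (Real.rpow_nonneg (znorm_nonneg j) _) (sq_nonneg _)
  have hterm : ∀ j, ENNReal.ofReal (znorm j ^ (4 * s) * ‖φ j‖ ^ 2) =
      (‖lat j‖ₑ ^ (2 * s) * ‖φ j‖ₑ) ^ (2 : ℝ) := fun j => by
    rw [ENNReal.ofReal_mul (Real.rpow_nonneg (znorm_nonneg j) _),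
      ← ENNReal.ofReal_rpow_of_nonneg (znorm_nonneg j) (by linarith), ofReal_znorm,
      ENNReal.ofReal_pow (norm_nonneg _), ofReal_norm, ENNReal.mul_rpow_of_nonneg _ _ (by norm_num),
      ← ENNReal.rpow_mul, ENNReal.rpow_two]
    ring_nf
  rw [sobNorm, sobENorm, Real.sqrt_eq_rpow,
    ← ENNReal.ofReal_rpow_of_nonneg (tsum_nonneg hnonneg) (by norm_num),
    ENNReal.ofReal_tsum_of_nonneg hnonneg hφ, tsum_congr hterm]

theorem norm_pairing_le {r s : ℝ} (hr : 0 ≤ r) (hs : 3 / 4 < s) {f g h : (Fin 3 → ℤ) → ℂ}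
    (hf : ∀ u : ℝ, Summable fun j => znorm j ^ u * ‖f j‖)
    (hg : ∀ u : ℝ, Summable fun j => znorm j ^ u * ‖g j‖)
    (hh : ∀ u : ℝ, Summable fun j => znorm j ^ u * ‖h j‖) (hf0 : f 0 = 0) (hg0 : g 0 = 0) :
    ‖∑' l, ((znorm l ^ (2 * r) : ℝ) : ℂ) * (∑' j, f j * g (l - j)) * starRingEnd ℂ (h l)‖ ≤
      (productConst r s).toReal *
        ((sobNorm r f * sobNorm s g + sobNorm s f * sobNorm r g) * sobNorm 0 h) := by
  have hsob {φ : (Fin 3 → ℤ) → ℂ} {t : ℝ} (ht : 0 ≤ t)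
      (hφ : ∀ u : ℝ, Summable fun j => znorm j ^ u * ‖φ j‖) :
      ENNReal.ofReal (sobNorm t φ) = sobENorm t fun j => ‖φ j‖ₑ :=
    ofReal_sobNorm ht <| summable_mul_sq_of_summable_mul
      (fun j => Real.rpow_nonneg (znorm_nonneg j) _) (fun j => norm_nonneg _) (hφ _)
      (by simpa using hφ 0)
  have hfgr := mul_nonneg (sobNorm_nonneg r f) (sobNorm_nonneg s g)
  have hfgs := mul_nonneg (sobNorm_nonneg s f) (sobNorm_nonneg r g)
  have hofReal : ENNReal.ofReal ((sobNorm r f * sobNorm s g + sobNorm s f * sobNorm r g) *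
      sobNorm 0 h) = (sobENorm r (‖f ·‖ₑ) * sobENorm s (‖g ·‖ₑ) +
        sobENorm s (‖f ·‖ₑ) * sobENorm r (‖g ·‖ₑ)) * sobENorm 0 (‖h ·‖ₑ) := by
    rw [ENNReal.ofReal_mul (add_nonneg hfgr hfgs), ENNReal.ofReal_add hfgr hfgs,
      ENNReal.ofReal_mul (sobNorm_nonneg r f), ENNReal.ofReal_mul (sobNorm_nonneg s f),
      hsob hr hf, hsob hr hg, hsob (by linarith) hf, hsob (by linarith) hg, hsob le_rfl hh]
  have hbound := (enorm_tsum_conv_le (by linarith) f g h).trans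
    (tsum_tsum_rpow_mul_le hr hs _ _ (‖h ·‖ₑ) (by simp [hf0]) (by simp [hg0]))
  rw [mul_assoc, ← hofReal] at hbound
  calc _ = ‖_‖ₑ.toReal := (toReal_enorm _).symm
    _ ≤ _ := ENNReal.toReal_mono (ENNReal.mul_ne_top (productConst_ne_top r s)
        ENNReal.ofReal_ne_top) hbound
    _ = _ := by rw [ENNReal.toReal_mul, ENNReal.toReal_ofReal
        (mul_nonneg (add_nonneg hfgr hfgs) (sobNorm_nonneg 0 h))]

end FourierProduct

open FourierProduct in
/-- Product estimate in Fourier variables: for smooth (rapidly decaying Fourier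
coefficients) zero-mean `f, g` and smooth `h`, any `r ≥ 0` and `ε > 0`,
`|⟨A^r(fg), h⟩| ≤ C_r (‖A^r f‖‖A^{3/4+ε} g‖ + ‖A^{3/4+ε} f‖‖A^r g‖)‖h‖`,
where `(fg)` is the convolution of coefficients and `A^s` multiplies the `j`-th
coefficient by `|j|^{2s}`. -/
theorem stmt13 (r ε : ℝ) (hr : 0 ≤ r) (hε : 0 < ε) :
    ∃ C : ℝ, 0 < C ∧ ∀ f g h : (Fin 3 → ℤ) → ℂ,
      (∀ s : ℝ, Summable fun j => znorm j ^ s * ‖f j‖) →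
      (∀ s : ℝ, Summable fun j => znorm j ^ s * ‖g j‖) →
      (∀ s : ℝ, Summable fun j => znorm j ^ s * ‖h j‖) →
      f 0 = 0 → g 0 = 0 →
      ‖∑' l : Fin 3 → ℤ,
          ((znorm l ^ (2 * r) : ℝ) : ℂ) * (∑' j : Fin 3 → ℤ, f j * g (l - j))
            * (starRingEnd ℂ) (h l)‖
        ≤ C * (sobNorm r f * sobNorm (3 / 4 + ε) g + sobNorm (3 / 4 + ε) f * sobNorm r g)
            * Real.sqrt (∑' l : Fin 3 → ℤ, ‖h l‖ ^ 2) := by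
  refine ⟨(productConst r (3 / 4 + ε)).toReal + 1, by positivity, fun f g h hf hg hh hf0 hg0 => ?_⟩
  rw [show √(∑' l, ‖h l‖ ^ 2) = sobNorm 0 h by simp [sobNorm], mul_assoc]
  calc _ ≤ (productConst r (3 / 4 + ε)).toReal * _ :=
        norm_pairing_le hr (by linarith) hf hg hh hf0 hg0
    _ ≤ _ := mul_le_mul_of_nonneg_right (by linarith) <| mul_nonneg
        (add_nonneg (mul_nonneg (sobNorm_nonneg _ _) (sobNorm_nonneg _ _))
          (mul_nonneg (sobNorm_nonneg _ _) (sobNorm_nonneg _ _))) (sobNorm_nonneg _ _)
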